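/- Let n ∈ {3, 4, 6}, let K be a number field whose degree over Q is 1 or a prime number, and let a, b ∈ K with 4a^3 + 27b^2 ≠ 0. If the elliptic curve E: y^2 = x^3 + ax + b over K has an n-isogeny, then there exists d ∈ K^* such that the quadratic twist E^(d): y^2 = x^3 + a d^2 x + b d^3 has a K-rational point of order n. -/

import Mathlib

open WeierstrassCurve IntermediateField Module

open scoped Classical in
/-- `E(K)` contains a subgroup isomorphic to `T`. -/
def WeierstrassCurve.ContainsTorsion {K : Type*} [Field K] (E : WeierstrassCurve K)
    (T : Type) [AddCommGroup T] : Prop :=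
  ∃ φ : T →+ E.toAffine.Point, Function.Injective φ

/-- The set of `j`-invariants of elliptic curves over `K` whose Mordell-Weil group contains
a subgroup isomorphic to `T`. -/
noncomputable def torsionJSet (K : Type*) [Field K] (T : Type) [AddCommGroup T] : Set K :=
  {j | ∃ (E : WeierstrassCurve K) (hE : E.IsElliptic),
    @WeierstrassCurve.j K _ E hE = j ∧ E.ContainsTorsion T}

open scoped Classical in
/-- `E` has an `n`-isogeny over `K`: a Galois-stable cyclic subgroup of order `n`
of the points of `E` over an algebraic closure of `K`. -/
def WeierstrassCurve.HasDegIsogeny {K : Type*} [Field K] (E : WeierstrassCurve K) (n : ℕ) :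
    Prop :=
  ∃ C : AddSubgroup (E.baseChange (AlgebraicClosure K)).toAffine.Point,
    Nonempty (C ≃+ ZMod n) ∧
    ∀ (σ : AlgebraicClosure K ≃ₐ[K] AlgebraicClosure K), ∀ P ∈ C,
      WeierstrassCurve.Affine.Point.map (W' := E.toAffine) σ.toAlgHom P ∈ C

/-- The set of `j`-invariants of elliptic curves over `K` admitting an `n`-isogeny. -/
noncomputable def isogenyJSet (K : Type*) [Field K] (n : ℕ) : Set K :=
  {j | ∃ (E : WeierstrassCurve K) (hE : E.IsElliptic),
    @WeierstrassCurve.j K _ E hE = j ∧ E.HasDegIsogeny n}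

open scoped Classical in
/-- The set of `j`-invariants of elliptic curves over `K` having a point of order `n`. -/
noncomputable def pointOrderJSet (K : Type*) [Field K] (n : ℕ) : Set K :=
  {j | ∃ (E : WeierstrassCurve K) (hE : E.IsElliptic),
    @WeierstrassCurve.j K _ E hE = j ∧ ∃ P : E.toAffine.Point, addOrderOf P = n}

/-- The short Weierstrass curve `y² = x³ + ax + b`. -/
def shortW (K : Type*) [Field K] (a b : K) : WeierstrassCurve K :=
  { a₁ := 0, a₂ := 0, a₃ := 0, a₄ := a, a₆ := b }

/-!
A generator `P` of the Galois-stable cyclic subgroup `C ≅ ℤ/n` is sent by every Galois automorphism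
to `±P`, because `(ℤ/n)ˣ = {±1}` for `n ∈ {3, 4, 6}`. Writing `P = (x, y)`, both `x` and `d := y²`
are then Galois-invariant, hence lie in `K`, and `d ≠ 0` since `P` is not `2`-torsion. Over `K̄` the
rescaling `(X, Y) ↦ (y² X, y³ Y)` is an isomorphism from `E` onto the twist `E^(d)` sending `P` to
`(d x, d²)`, which is therefore a `K`-rational point of `E^(d)` of order `n`.
-/

namespace WeierstrassCurve

variable {F : Type*} [Field F]

/-- The change of variables `(x, y) ↦ (u² x, u³ y)`: Mathlib's `⟨u, r, s, t⟩` substitutes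
`x = u² x' + r`, hence the inverse. -/
abbrev VariableChange.scale (u : Fˣ) : VariableChange F := ⟨u⁻¹, 0, 0, 0⟩

variable (W : WeierstrassCurve F) (u : Fˣ)

@[simp] lemma scale_a₁ : (VariableChange.scale u • W).a₁ = u * W.a₁ := by
  simp [variableChange_a₁]
@[simp] lemma scale_a₂ : (VariableChange.scale u • W).a₂ = u ^ 2 * W.a₂ := by
  simp [variableChange_a₂]
@[simp] lemma scale_a₃ : (VariableChange.scale u • W).a₃ = u ^ 3 * W.a₃ := by
  simp [variableChange_a₃]
@[simp] lemma scale_a₄ : (VariableChange.scale u • W).a₄ = u ^ 4 * W.a₄ := by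
  simp [variableChange_a₄]
@[simp] lemma scale_a₆ : (VariableChange.scale u • W).a₆ = u ^ 6 * W.a₆ := by
  simp [variableChange_a₆]

namespace Affine

variable {W} {x y x₁ x₂ y₁ y₂ ℓ : F}

lemma scale_equation (h : W.toAffine.Equation x y) :
    (VariableChange.scale u • W).toAffine.Equation (u ^ 2 * x) (u ^ 3 * y) := by
  rw [equation_iff] at h ⊢
  simp only [scale_a₁, scale_a₂, scale_a₃, scale_a₄, scale_a₆]
  linear_combination (u : F) ^ 6 * h

lemma scale_nonsingular (h : W.toAffine.Nonsingular x y) :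
    (VariableChange.scale u • W).toAffine.Nonsingular (u ^ 2 * x) (u ^ 3 * y) := by
  rw [nonsingular_iff'] at h ⊢
  refine ⟨scale_equation u h.1, ?_⟩
  simp only [scale_a₁, scale_a₂, scale_a₃, scale_a₄]
  rcases h.2 with hX | hY
  · left
    rw [show (u : F) * W.a₁ * (u ^ 3 * y) - (3 * (u ^ 2 * x) ^ 2 + 2 * (u ^ 2 * W.a₂) * (u ^ 2 * x)
      + u ^ 4 * W.a₄) = u ^ 4 * (W.a₁ * y - (3 * x ^ 2 + 2 * W.a₂ * x + W.a₄)) by ring]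
    exact mul_ne_zero (pow_ne_zero _ u.ne_zero) hX
  · right
    rw [show 2 * (u ^ 3 * y) + u * W.a₁ * (u ^ 2 * x) + u ^ 3 * W.a₃
      = u ^ 3 * (2 * y + W.a₁ * x + W.a₃) by ring]
    exact mul_ne_zero (pow_ne_zero _ u.ne_zero) hY

lemma scale_negY : (VariableChange.scale u • W).toAffine.negY (u ^ 2 * x) (u ^ 3 * y) =
    u ^ 3 * W.toAffine.negY x y := by
  simp only [negY, scale_a₁, scale_a₃]
  ring

lemma scale_addX : (VariableChange.scale u • W).toAffine.addX (u ^ 2 * x₁) (u ^ 2 * x₂) (u * ℓ) =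
    u ^ 2 * W.toAffine.addX x₁ x₂ ℓ := by
  simp only [addX, scale_a₁, scale_a₂]
  ring

lemma scale_addY : (VariableChange.scale u • W).toAffine.addY (u ^ 2 * x₁) (u ^ 2 * x₂)
    (u ^ 3 * y₁) (u * ℓ) = u ^ 3 * W.toAffine.addY x₁ x₂ y₁ ℓ := by
  simp only [addY, negAddY, addX, negY, scale_a₁, scale_a₂, scale_a₃]
  ring

variable [DecidableEq F]

lemma scale_slope : (VariableChange.scale u • W).toAffine.slope (u ^ 2 * x₁) (u ^ 2 * x₂)
    (u ^ 3 * y₁) (u ^ 3 * y₂) = u * W.toAffine.slope x₁ x₂ y₁ y₂ := by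
  have hu := u.ne_zero
  simp only [slope, scale_negY, scale_a₁, scale_a₂, scale_a₄, mul_right_inj' (pow_ne_zero _ hu)]
  split_ifs
  · rw [mul_zero]
  · rw [← mul_sub, mul_div_assoc',
      ← mul_div_mul_left ((u : F) * _) (y₁ - W.toAffine.negY x₁ y₁) (pow_ne_zero 3 hu)]
    ring_nf
  · rw [← mul_sub, ← mul_sub, mul_div_assoc',
      ← mul_div_mul_left ((u : F) * _) (x₁ - x₂) (pow_ne_zero 2 hu)]
    ring_nf

namespace Point

noncomputable def scale : W.toAffine.Point →+ (VariableChange.scale u • W).toAffine.Point where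
  toFun P := match P with
    | 0 => 0
    | some _ _ h => some _ _ (scale_nonsingular u h)
  map_zero' := rfl
  map_add' := by
    have hu := u.ne_zero
    rintro (_ | ⟨x₁, y₁, h₁⟩) (_ | ⟨x₂, y₂, h₂⟩)
    any_goals rfl
    by_cases hxy : x₁ = x₂ ∧ y₁ = W.toAffine.negY x₂ y₂
    · rw [add_of_Y_eq hxy.1 hxy.2, add_of_Y_eq (by rw [hxy.1]) (by rw [scale_negY, hxy.2])]
    · have hxy' : ¬(u ^ 2 * x₁ = u ^ 2 * x₂ ∧
          u ^ 3 * y₁ = (VariableChange.scale u • W).toAffine.negY (u ^ 2 * x₂) (u ^ 3 * y₂)) := by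
        rwa [scale_negY, mul_right_inj' (pow_ne_zero _ hu), mul_right_inj' (pow_ne_zero _ hu)]
      simp only [add_some hxy, add_some hxy', scale_slope, scale_addX, scale_addY]

lemma scale_injective : Function.Injective (scale (W := W) u) := by
  rw [injective_iff_map_eq_zero]
  rintro (_ | ⟨x, y, h⟩) hP
  · rfl
  · exact absurd hP (some_ne_zero _)

end Point

end Affine
end WeierstrassCurve

namespace WeierstrassCurve.Affine.Point

variable {F : Type*} [Field F] [DecidableEq F] {W : WeierstrassCurve F}

lemma addOrderOf_some_of_eq_scale {W' : WeierstrassCurve F} {u : Fˣ}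
    (hW : W' = VariableChange.scale u • W) {x y x' y' : F} (h : W.toAffine.Nonsingular x y)
    (h' : W'.toAffine.Nonsingular x' y') (hx : x' = u ^ 2 * x) (hy : y' = u ^ 3 * y) :
    addOrderOf (some _ _ h') = addOrderOf (some _ _ h) := by
  subst hW hx hy
  exact addOrderOf_injective (scale (W := W) u) (scale_injective u) (some _ _ h)

lemma addOrderOf_baseChange {K : Type*} [Field K] [Algebra F K] [DecidableEq K]
    (P : W.toAffine.Point) : addOrderOf (baseChange (W' := W) F K P) = addOrderOf P :=
  addOrderOf_injective _ (map_injective _) P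

lemma exists_eq_some_of_two_lt_addOrderOf {P : W.toAffine.Point} (hP : 2 < addOrderOf P) :
    ∃ x y, ∃ h : W.toAffine.Nonsingular x y, P = some _ _ h ∧ y ≠ W.toAffine.negY x y := by
  rcases P with _ | ⟨x, y, h⟩
  · rw [← zero_def, addOrderOf_zero] at hP
    omega
  · refine ⟨x, y, h, rfl, fun hy => ?_⟩
    have : addOrderOf (some _ _ h) ≤ 2 :=
      addOrderOf_le_of_nsmul_eq_zero two_pos (by rw [two_nsmul, add_self_of_Y_eq hy])
    omega

end WeierstrassCurve.Affine.Point

lemma ZMod.eq_one_or_eq_neg_one_of_isUnit {n : ℕ} (hn : n ∈ ({3, 4, 6} : Set ℕ)) {u : ZMod n}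
    (hu : IsUnit u) : u = 1 ∨ u = -1 := by
  obtain rfl | rfl | rfl := hn <;> revert u <;> decide

lemma ZMod.addMonoidHom_apply_eq_mul {n : ℕ} (f : ZMod n →+ ZMod n) (x : ZMod n) :
    f x = f 1 * x := by
  rw [mul_comm, ← x.intCast_zmod_cast, ← zsmul_eq_mul, ← map_zsmul, zsmul_one]

lemma ZMod.eq_or_eq_neg_of_injective {n : ℕ} (hn : n ∈ ({3, 4, 6} : Set ℕ))
    {f : ZMod n →+ ZMod n} (hf : Function.Injective f) (x : ZMod n) : f x = x ∨ f x = -x := by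
  have : NeZero n := ⟨by obtain rfl | rfl | rfl := hn <;> norm_num⟩
  obtain ⟨w, hw⟩ := Finite.surjective_of_injective hf 1
  have hunit : IsUnit (f 1) :=
    IsUnit.of_mul_eq_one w (by rwa [← addMonoidHom_apply_eq_mul])
  rw [addMonoidHom_apply_eq_mul f x]
  rcases eq_one_or_eq_neg_one_of_isUnit hn hunit with h | h <;> simp [h]

lemma AddSubgroup.apply_eq_or_eq_neg_of_addEquiv_zmod {G : Type*} [AddGroup G]
    {C : AddSubgroup G} {n : ℕ} (hn : n ∈ ({3, 4, 6} : Set ℕ)) (e : C ≃+ ZMod n) {f : G →+ G}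
    (hf : Function.Injective f) (hC : ∀ P ∈ C, f P ∈ C) {P : G} (hP : P ∈ C) :
    f P = P ∨ f P = -P := by
  let g : C →+ C := (f.comp C.subtype).codRestrict C fun Q => hC Q Q.2
  have hg : Function.Injective g := fun Q R h => Subtype.ext (hf (congrArg Subtype.val h))
  let t : ZMod n →+ ZMod n := e.toAddMonoidHom.comp (g.comp e.symm.toAddMonoidHom)
  have ht : Function.Injective t := e.injective.comp (hg.comp e.symm.injective)
  have hte : t (e ⟨P, hP⟩) = e (g ⟨P, hP⟩) := by simp [t]
  rcases ZMod.eq_or_eq_neg_of_injective hn ht (e ⟨P, hP⟩) with h | h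
  · left
    exact congrArg Subtype.val (e.injective (hte.symm.trans h))
  · right
    exact congrArg Subtype.val (e.injective ((hte.symm.trans h).trans (map_neg e _).symm))

section shortW

variable {F : Type*} [Field F] (a b : F)

lemma shortW_negY (x y : F) : (shortW F a b).toAffine.negY x y = -y := by
  simp [Affine.negY, shortW]

lemma shortW_equation_iff (x y : F) :
    (shortW F a b).toAffine.Equation x y ↔ y ^ 2 = x ^ 3 + a * x + b := by
  simp [Affine.equation_iff, shortW]

lemma shortW_Δ : (shortW F a b).Δ = -16 * (4 * a ^ 3 + 27 * b ^ 2) := by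
  simp only [Δ, b₂, b₄, b₆, b₈, shortW]
  ring

lemma shortW_scale (u : Fˣ) :
    VariableChange.scale u • shortW F a b = shortW F (u ^ 4 * a) (u ^ 6 * b) := by
  ext <;> simp [shortW]

lemma shortW_baseChange {K : Type*} [Field K] [Algebra F K] :
    (shortW F a b).baseChange K = shortW K (algebraMap F K a) (algebraMap F K b) := by
  ext <;> simp [shortW, baseChange, WeierstrassCurve.map]

lemma shortW_twist_Δ (d : F) :
    (shortW F (a * d ^ 2) (b * d ^ 3)).Δ = d ^ 6 * (shortW F a b).Δ := by
  rw [shortW_Δ, shortW_Δ]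
  ring

variable {a b} in
lemma shortW_twist_nonsingular {d x : F} (hΔ : (shortW F a b).Δ ≠ 0) (hd : d ≠ 0)
    (hx : d = x ^ 3 + a * x + b) :
    (shortW F (a * d ^ 2) (b * d ^ 3)).toAffine.Nonsingular (d * x) (d ^ 2) := by
  rw [← Affine.equation_iff_nonsingular_of_Δ_ne_zero, shortW_equation_iff]
  · linear_combination d ^ 3 * hx
  · rw [shortW_twist_Δ]
    exact mul_ne_zero (pow_ne_zero _ hd) hΔ

lemma shortW_twist_baseChange {K : Type*} [Field K] [Algebra F K] (d : F)
    (u : Kˣ) (hu : (u : K) ^ 2 = algebraMap F K d) :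
    (shortW F (a * d ^ 2) (b * d ^ 3)).baseChange K =
      VariableChange.scale u • (shortW F a b).baseChange K := by
  rw [shortW_baseChange, shortW_baseChange, shortW_scale, map_mul, map_mul, map_pow, map_pow, ← hu]
  congr 1 <;> ring

lemma shortW_exists_twist_addOrderOf_eq {K L : Type*} [Field K] [Field L] [Algebra K L]
    [IsGalois K L] [DecidableEq K] [DecidableEq L] {a b : K} (hΔ : (shortW K a b).Δ ≠ 0)
    {P : ((shortW K a b).baseChange L).toAffine.Point} (hP : 2 < addOrderOf P)
    (hσ : ∀ σ : L ≃ₐ[K] L, Affine.Point.map σ.toAlgHom P = P ∨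
      Affine.Point.map σ.toAlgHom P = -P) :
    ∃ d : K, d ≠ 0 ∧
      ∃ Q : (shortW K (a * d ^ 2) (b * d ^ 3)).toAffine.Point, addOrderOf Q = addOrderOf P := by
  obtain ⟨x, y, h, rfl, hy⟩ := Affine.Point.exists_eq_some_of_two_lt_addOrderOf hP
  rw [shortW_baseChange, shortW_negY] at hy
  have hfix (σ : L ≃ₐ[K] L) : σ x = x ∧ σ (y ^ 2) = y ^ 2 := by
    have := hσ σ
    simp only [Affine.Point.map_some, Affine.Point.neg_some, Affine.Point.some.injEq,
      shortW_baseChange, shortW_negY] at this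
    rcases this with ⟨hσx, hσy⟩ | ⟨hσx, hσy⟩ <;> simp_all
  obtain ⟨x₀, rfl⟩ := (InfiniteGalois.mem_range_algebraMap_iff_fixed x).mpr fun σ => (hfix σ).1
  obtain ⟨d, hd⟩ := (InfiniteGalois.mem_range_algebraMap_iff_fixed (y ^ 2)).mpr
    fun σ => (hfix σ).2
  have hy₀ : y ≠ 0 := fun h₀ => hy (by rw [h₀, neg_zero])
  have hd₀ : d ≠ 0 := by
    rintro rfl
    exact hy₀ (pow_eq_zero_iff two_ne_zero |>.mp (by rw [← hd, map_zero]))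
  have hdx₀ : d = x₀ ^ 3 + a * x₀ + b := by
    have := h.1
    rw [shortW_baseChange, shortW_equation_iff, ← hd] at this
    exact (algebraMap K L).injective (by simpa using this)
  refine ⟨d, hd₀, .some _ _ (shortW_twist_nonsingular hΔ hd₀ hdx₀), ?_⟩
  rw [← Affine.Point.addOrderOf_baseChange (K := L)]
  refine Affine.Point.addOrderOf_some_of_eq_scale
    (shortW_twist_baseChange a b d (Units.mk0 y hy₀) hd.symm) h _ ?_ ?_
  · simp [hd]
  · simp [hd]
    ring

end shortW

open scoped Classical in
lemma WeierstrassCurve.HasDegIsogeny.exists_addOrderOf_eq_and_map_eq_or_eq_neg {K : Type*}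
    [Field K] {E : WeierstrassCurve K} {n : ℕ} (hE : E.HasDegIsogeny n)
    (hn : n ∈ ({3, 4, 6} : Set ℕ)) :
    ∃ P : (E.baseChange (AlgebraicClosure K)).toAffine.Point, addOrderOf P = n ∧
      ∀ σ : AlgebraicClosure K ≃ₐ[K] AlgebraicClosure K,
        Affine.Point.map (W' := E.toAffine) σ.toAlgHom P = P ∨
          Affine.Point.map (W' := E.toAffine) σ.toAlgHom P = -P := by
  obtain ⟨C, ⟨e⟩, hC⟩ := hE
  refine ⟨e.symm 1, ?_, fun σ => C.apply_eq_or_eq_neg_of_addEquiv_zmod hn e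
    (Affine.Point.map_injective _) (hC σ) (e.symm 1).2⟩
  rw [AddSubgroup.addOrderOf_coe, AddEquiv.addOrderOf_eq, ZMod.addOrderOf_one]

open scoped Classical in
theorem isogeny_gives_twist_with_torsion_general (n : ℕ) (hn : n ∈ ({3, 4, 6} : Set ℕ))
    (K : Type*) [Field K] [NumberField K]
    (a b : K) (hab : 4 * a ^ 3 + 27 * b ^ 2 ≠ 0)
    (hiso : (shortW K a b).HasDegIsogeny n) :
    ∃ d : K, d ≠ 0 ∧
      ∃ P : (shortW K (a * d ^ 2) (b * d ^ 3)).toAffine.Point, addOrderOf P = n := by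
  obtain ⟨P, hPn, hσ⟩ := hiso.exists_addOrderOf_eq_and_map_eq_or_eq_neg hn
  have hΔ : (shortW K a b).Δ ≠ 0 := by
    rw [shortW_Δ]
    exact mul_ne_zero (by norm_num) hab
  have hP : 2 < addOrderOf P := by
    obtain rfl | rfl | rfl := hn <;> simp [hPn]
  obtain ⟨d, hd, Q, hQ⟩ := shortW_exists_twist_addOrderOf_eq hΔ hP hσ
  exact ⟨d, hd, Q, hQ.trans hPn⟩

open scoped Classical in
/-- For `n ∈ {3, 4, 6}` and a number field `K` of degree 1 or prime
degree, every elliptic curve `y² = x³ + ax + b` over `K` with an `n`-isogeny has a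
quadratic twist with a `K`-rational point of order `n`. -/
theorem isogeny_gives_twist_with_torsion (n : ℕ) (hn : n ∈ ({3, 4, 6} : Set ℕ))
    (K : Type*) [Field K] [NumberField K]
    (hdeg : Module.finrank ℚ K = 1 ∨ Nat.Prime (Module.finrank ℚ K))
    (a b : K) (hab : 4 * a ^ 3 + 27 * b ^ 2 ≠ 0)
    (hiso : (shortW K a b).HasDegIsogeny n) :
    ∃ d : K, d ≠ 0 ∧
      ∃ P : (shortW K (a * d ^ 2) (b * d ^ 3)).toAffine.Point, addOrderOf P = n :=
  isogeny_gives_twist_with_torsion_general n hn K a b hab hiso
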